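/- In misère Partizan Kayles, a position consisting of exactly k strips of length 1 and k strips of length 2 (k ≥ 1) has outcome N: whoever moves first wins. -/

import Mathlib

/-- Add a strip of length `k` to a position (strips of length 0 are discarded). -/
def addStrip (m : Multiset ℕ) (k : ℕ) : Multiset ℕ := if k = 0 then m else k ::ₘ m

/-- Left removes one square from a strip of length `n ≥ 1`, leaving strips `i` and `n-1-i`. -/
def LeftMove (G G' : Multiset ℕ) : Prop :=
  ∃ n ∈ G, ∃ i, i + 1 ≤ n ∧ G' = addStrip (addStrip (G.erase n) i) (n - 1 - i)

/-- Right removes two adjacent squares from a strip of length `n ≥ 2`, leaving `i` and `n-2-i`. -/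
def RightMove (G G' : Multiset ℕ) : Prop :=
  ∃ n ∈ G, ∃ i, i + 2 ≤ n ∧ G' = addStrip (addStrip (G.erase n) i) (n - 2 - i)

mutual
  /-- Misère play: Left, to move, wins (a player unable to move wins). -/
  inductive LeftWinsMover : Multiset ℕ → Prop
    | cannot (G : Multiset ℕ) : (¬ ∃ G', LeftMove G G') → LeftWinsMover G
    | move (G G' : Multiset ℕ) : LeftMove G G' → LeftWinsWaiter G' → LeftWinsMover G
  /-- Misère play: Left wins with Right to move. -/
  inductive LeftWinsWaiter : Multiset ℕ → Prop
    | intro (G : Multiset ℕ) : (∃ G', RightMove G G') →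
        (∀ G', RightMove G G' → LeftWinsMover G') → LeftWinsWaiter G
end

inductive Outcome | L | N | P | R
  deriving DecidableEq

open Classical in
/-- The misère outcome `o⁻(G)`. -/
noncomputable def outcome (G : Multiset ℕ) : Outcome :=
  if LeftWinsMover G then (if LeftWinsWaiter G then Outcome.L else Outcome.N)
  else (if LeftWinsWaiter G then Outcome.P else Outcome.R)

/-- The partial order on outcomes: `L` greatest, `R` least, `N` and `P` incomparable. -/
def Outcome.le (a b : Outcome) : Prop := a = b ∨ a = Outcome.R ∨ b = Outcome.L

/-- `pos k j` is the position `kS₁ + jS₂`. -/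
def pos (k j : ℕ) : Multiset ℕ := Multiset.replicate k 1 + Multiset.replicate j 2

/-!
A position `k S₁ + j S₂` only ever moves to another such position: Left goes to `(k - 1, j)` or
`(k + 1, j - 1)`, Right only to `(k, j - 1)`. Strong induction on `k + 2 j` shows that Left wins
moving first exactly when `k ≤ j` and `j ≡ k [MOD 3]`, and wins with Right moving first exactly
when `k + 1 ≤ j` and `j ≡ k + 1 [MOD 3]`. For `k = j` the first condition holds and the second
fails.
-/

lemma pos_succ_left (k j : ℕ) : pos (k + 1) j = 1 ::ₘ pos k j := by
  simp [pos, Multiset.replicate_succ, Multiset.cons_add]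

lemma pos_succ_right (k j : ℕ) : pos k (j + 1) = 2 ::ₘ pos k j := by
  simp [pos, Multiset.replicate_succ]

lemma mem_pos {n k j : ℕ} : n ∈ pos k j ↔ n = 1 ∧ 1 ≤ k ∨ n = 2 ∧ 1 ≤ j := by
  simp only [pos, Multiset.mem_add, Multiset.mem_replicate]
  omega

lemma pos_erase_one {k : ℕ} (j : ℕ) (hk : 1 ≤ k) : (pos k j).erase 1 = pos (k - 1) j := by
  obtain ⟨k, rfl⟩ := Nat.exists_eq_add_of_le' hk
  simp [pos_succ_left]

lemma pos_erase_two (k : ℕ) {j : ℕ} (hj : 1 ≤ j) : (pos k j).erase 2 = pos k (j - 1) := by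
  obtain ⟨j, rfl⟩ := Nat.exists_eq_add_of_le' hj
  simp [pos_succ_right]

lemma leftMove_pos_iff {k j : ℕ} {G : Multiset ℕ} :
    LeftMove (pos k j) G ↔ 1 ≤ k ∧ G = pos (k - 1) j ∨ 1 ≤ j ∧ G = pos (k + 1) (j - 1) := by
  constructor
  · rintro ⟨n, hn, i, hi, rfl⟩
    rcases mem_pos.mp hn with ⟨rfl, hk⟩ | ⟨rfl, hj⟩
    · obtain rfl : i = 0 := by omega
      exact .inl ⟨hk, by simp [addStrip, pos_erase_one j hk]⟩
    · refine .inr ⟨hj, ?_⟩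
      obtain rfl | rfl : i = 0 ∨ i = 1 := by omega
      all_goals simp [addStrip, pos_erase_two k hj, pos_succ_left]
  · rintro (⟨hk, rfl⟩ | ⟨hj, rfl⟩)
    · exact ⟨1, mem_pos.mpr (.inl ⟨rfl, hk⟩), 0, le_rfl, by simp [addStrip, pos_erase_one j hk]⟩
    · refine ⟨2, mem_pos.mpr (.inr ⟨rfl, hj⟩), 0, by omega, ?_⟩
      simp [addStrip, pos_erase_two k hj, pos_succ_left]

lemma rightMove_pos_iff {k j : ℕ} {G : Multiset ℕ} :
    RightMove (pos k j) G ↔ 1 ≤ j ∧ G = pos k (j - 1) := by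
  constructor
  · rintro ⟨n, hn, i, hi, rfl⟩
    rcases mem_pos.mp hn with ⟨rfl, -⟩ | ⟨rfl, hj⟩
    · omega
    · obtain rfl : i = 0 := by omega
      exact ⟨hj, by simp [addStrip, pos_erase_two k hj]⟩
  · rintro ⟨hj, rfl⟩
    exact ⟨2, mem_pos.mpr (.inr ⟨rfl, hj⟩), 0, le_rfl, by simp [addStrip, pos_erase_two k hj]⟩

mutual

lemma leftWinsMover_pos_iff (k j : ℕ) :
    LeftWinsMover (pos k j) ↔ k ≤ j ∧ (j - k) % 3 = 0 := by
  constructor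
  · rintro (⟨_, hstuck⟩ | ⟨_, G, hmove, hwin⟩)
    · by_contra hlose
      rcases Nat.eq_zero_or_pos k with rfl | hk
      · exact hstuck ⟨_, leftMove_pos_iff.mpr (.inr ⟨by omega, rfl⟩)⟩
      · exact hstuck ⟨_, leftMove_pos_iff.mpr (.inl ⟨hk, rfl⟩)⟩
    · rcases leftMove_pos_iff.mp hmove with ⟨hk, rfl⟩ | ⟨hj, rfl⟩
      · have := (leftWinsWaiter_pos_iff (k - 1) j).mp hwin
        omega
      · have := (leftWinsWaiter_pos_iff (k + 1) (j - 1)).mp hwin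
        omega
  · rintro ⟨hkj, hmod⟩
    rcases Nat.eq_zero_or_pos k with rfl | hk
    · rcases Nat.eq_zero_or_pos j with rfl | hj
      · refine .cannot _ fun ⟨G, hmove⟩ => ?_
        rcases leftMove_pos_iff.mp hmove with ⟨h, -⟩ | ⟨h, -⟩ <;> omega
      · exact .move _ _ (leftMove_pos_iff.mpr (.inr ⟨hj, rfl⟩))
          ((leftWinsWaiter_pos_iff 1 (j - 1)).mpr (by omega))
    · exact .move _ _ (leftMove_pos_iff.mpr (.inl ⟨hk, rfl⟩))
        ((leftWinsWaiter_pos_iff (k - 1) j).mpr (by omega))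
termination_by k + 2 * j
decreasing_by all_goals omega

lemma leftWinsWaiter_pos_iff (k j : ℕ) :
    LeftWinsWaiter (pos k j) ↔ k + 1 ≤ j ∧ (j - (k + 1)) % 3 = 0 := by
  constructor
  · rintro ⟨_, ⟨G, hmove⟩, hwin⟩
    obtain ⟨hj, rfl⟩ := rightMove_pos_iff.mp hmove
    have := (leftWinsMover_pos_iff k (j - 1)).mp (hwin _ hmove)
    omega
  · rintro ⟨hkj, hmod⟩
    refine .intro _ ⟨_, rightMove_pos_iff.mpr ⟨by omega, rfl⟩⟩ fun G hmove => ?_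
    obtain ⟨hj, rfl⟩ := rightMove_pos_iff.mp hmove
    exact (leftWinsMover_pos_iff k (j - 1)).mpr (by omega)
termination_by k + 2 * j
decreasing_by all_goals omega

end

theorem kayles_equal_ones_twos (k : ℕ) (hk : 1 ≤ k) :
    outcome (pos k k) = Outcome.N := by
  have hmover : LeftWinsMover (pos k k) := (leftWinsMover_pos_iff k k).mpr (by simp)
  have hwaiter : ¬ LeftWinsWaiter (pos k k) := by simp [leftWinsWaiter_pos_iff]
  simp [outcome, hmover, hwaiter]
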